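/- arXiv:math/0010092 — 2 statements merged into one kernel-verified Lean document; each statement's English description precedes it below -/
import Mathlib

section
/- Let P₁, P₂ be finite bounded posets with |P₁|, |P₂| > 2, and Q the poset (P₁ \ {0̂₁,1̂₁}) × (P₂ \ {0̂₂,1̂₂}) with new least and greatest elements adjoined. Let A be a nonempty subset of Q \ {0̂_Q, 1̂_Q} with projections A↾₁, A↾₂. If min I(P₁,A↾₁) = {1̂₁} or min I(P₂,A↾₂) = {1̂₂}, then I(Q,A) = {1̂_Q}. -/
open scoped Classical
open Set

/-- The order filter generated by a subset. -/
def upFilter (P : Type*) [Preorder P] (S : Set P) : Set P := {x | ∃ s ∈ S, s ≤ x}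

/-- The set of minimal elements of a subset. -/
def minsOf (P : Type*) [Preorder P] (S : Set P) : Set P := {x | Minimal (· ∈ S) x}

/-- The set of intersecters for `A` in `P`. -/
def inters (P : Type*) [PartialOrder P] [OrderBot P] (A : Set P) : Set P :=
  if A = ∅ then Set.univ
  else if A = {(⊥ : P)} then ∅
  else {b | ∀ a ∈ A, a ≠ ⊥ → ∃ z : P, IsAtom z ∧ z ≤ b ∧ z ≤ a}

/-- The set of complementers for `A` in `P`. -/
def compls (P : Type*) [PartialOrder P] [OrderBot P] (A : Set P) : Set P := (inters P A)ᶜ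

/-- The blocker map: the set of minimal intersecters for `A` in `P`. -/
def bmap (P : Type*) [PartialOrder P] [OrderBot P] (A : Set P) : Set P := minsOf P (inters P A)

/-- Interior of a bounded poset: elements distinct from bottom and top. -/
abbrev Interior (P : Type*) [PartialOrder P] [BoundedOrder P] : Type _ :=
  {x : P // x ≠ ⊥ ∧ x ≠ ⊤}

/-- The product of the interiors of two bounded posets, with new least and
greatest elements adjoined. -/
abbrev TruncProd (P₁ P₂ : Type*) [PartialOrder P₁] [BoundedOrder P₁]
    [PartialOrder P₂] [BoundedOrder P₂] : Type _ :=
  WithBot (WithTop (Interior P₁ × Interior P₂))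

/-- Embedding of interior pairs into the truncated product. -/
def emb (P₁ P₂ : Type*) [PartialOrder P₁] [BoundedOrder P₁]
    [PartialOrder P₂] [BoundedOrder P₂] :
    Interior P₁ × Interior P₂ → TruncProd P₁ P₂ :=
  fun p => ((p : WithTop (Interior P₁ × Interior P₂)) : TruncProd P₁ P₂)

/-!
An atom of `Q` lies below an interior pair, so it is itself a pair of atoms of `P₁` and `P₂`.
Hence `1̂_Q` is an intersecter, and any other intersecter is a pair `(b₁, b₂)` whose coordinates
are intersecters of the projections `A↾₁`, `A↾₂`. In a finite poset every intersecter lies above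
a minimal one; if the only minimal one is `1̂ᵢ`, this forces `bᵢ = 1̂ᵢ`, although `bᵢ` is interior.
-/

lemma WithBot.isAtom_coe_iff {α : Type*} [PartialOrder α] {a : α} :
    IsAtom (a : WithBot α) ↔ IsMin a :=
  bot_covBy_iff.symm.trans WithBot.bot_covBy_coe

lemma WithTop.isMin_coe_iff {α : Type*} [Preorder α] {a : α} :
    IsMin (a : WithTop α) ↔ IsMin a :=
  ⟨fun h _ hb => WithTop.coe_le_coe.mp (h (WithTop.coe_le_coe.mpr hb)), IsMin.withTop⟩

lemma eq_top_of_minsOf_eq_singleton_top {P : Type*} [PartialOrder P] [OrderTop P] [Finite P]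
    {S : Set P} (hS : minsOf P S = {⊤}) {x : P} (hx : x ∈ S) : x = ⊤ := by
  obtain ⟨m, hmx, hm⟩ := exists_minimal_le_of_wellFoundedLT (· ∈ S) x hx
  have hm_top : m = ⊤ := hS.subset hm
  exact top_le_iff.mp (hm_top ▸ hmx)

section Inters

variable {P : Type*} [PartialOrder P] [OrderBot P] {A : Set P}

lemma mem_inters_iff_of_bot_notMem (hA : A.Nonempty) (hbot : ⊥ ∉ A) {b : P} :
    b ∈ inters P A ↔ ∀ a ∈ A, ∃ z, IsAtom z ∧ z ≤ b ∧ z ≤ a := by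
  rw [inters, if_neg hA.ne_empty, if_neg (by rintro rfl; exact hbot rfl)]
  exact forall₂_congr fun a ha => imp_iff_right (ne_of_mem_of_not_mem ha hbot)

lemma bot_notMem_inters (hA : A.Nonempty) (hbot : ⊥ ∉ A) : ⊥ ∉ inters P A := by
  intro h
  obtain ⟨a, ha⟩ := hA
  obtain ⟨z, hz, hz_bot, -⟩ := (mem_inters_iff_of_bot_notMem ⟨a, ha⟩ hbot).mp h a ha
  exact hz.1 (le_bot_iff.mp hz_bot)

end Inters

lemma Interior.isMin_iff_isAtom {P : Type*} [PartialOrder P] [BoundedOrder P] {x : Interior P} :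
    IsMin x ↔ IsAtom x.1 := by
  refine ⟨fun h => ⟨x.2.1, fun b hb => ?_⟩, fun h b hb => ?_⟩
  · by_contra hb_bot
    exact hb.not_ge (h (show (⟨b, hb_bot, ne_top_of_lt hb⟩ : Interior P) ≤ x from hb.le))
  · exact ((h.le_iff.mp hb).resolve_left b.2.1).ge

section TruncProd

variable {P₁ P₂ : Type*} [PartialOrder P₁] [BoundedOrder P₁] [PartialOrder P₂] [BoundedOrder P₂]

lemma emb_le_emb_iff {p q : Interior P₁ × Interior P₂} :
    emb P₁ P₂ p ≤ emb P₁ P₂ q ↔ p.1.1 ≤ q.1.1 ∧ p.2.1 ≤ q.2.1 := by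
  simp [emb, Prod.le_def]

lemma emb_ne_top (p : Interior P₁ × Interior P₂) : emb P₁ P₂ p ≠ ⊤ := by
  simp [emb]

lemma exists_emb_eq {a : TruncProd P₁ P₂} (hb : a ≠ ⊥) (ht : a ≠ ⊤) :
    ∃ p, a = emb P₁ P₂ p := by
  induction a using WithBot.recBotCoe with
  | bot => exact absurd rfl hb
  | coe w =>
    induction w using WithTop.recTopCoe with
    | top => exact absurd rfl ht
    | coe p => exact ⟨p, rfl⟩

lemma isAtom_emb_iff {p : Interior P₁ × Interior P₂} :
    IsAtom (emb P₁ P₂ p) ↔ IsAtom p.1.1 ∧ IsAtom p.2.1 := by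
  rw [emb, WithBot.isAtom_coe_iff, WithTop.isMin_coe_iff, Prod.isMin_iff,
    Interior.isMin_iff_isAtom, Interior.isMin_iff_isAtom]

lemma exists_emb_eq_of_isAtom_le {z : TruncProd P₁ P₂} (hz : IsAtom z)
    {q : Interior P₁ × Interior P₂} (hzq : z ≤ emb P₁ P₂ q) :
    ∃ r, z = emb P₁ P₂ r ∧ IsAtom r.1.1 ∧ IsAtom r.2.1 := by
  obtain ⟨r, rfl⟩ := exists_emb_eq hz.1 (ne_top_of_le_ne_top (emb_ne_top q) hzq)
  exact ⟨r, rfl, isAtom_emb_iff.mp hz⟩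

variable {A : Set (TruncProd P₁ P₂)}

lemma exists_emb_eq_of_mem (hA' : ∀ q ∈ A, q ≠ ⊥ ∧ q ≠ ⊤) {a : TruncProd P₁ P₂} (ha : a ∈ A) :
    ∃ p, a = emb P₁ P₂ p :=
  exists_emb_eq (hA' a ha).1 (hA' a ha).2

lemma fst_mem_inters (hA : A.Nonempty) (hA' : ∀ q ∈ A, q ≠ ⊥ ∧ q ≠ ⊤)
    {p : Interior P₁ × Interior P₂} (hp : emb P₁ P₂ p ∈ inters _ A) :
    p.1.1 ∈ inters P₁ {a₁ | ∃ q, emb P₁ P₂ q ∈ A ∧ q.1.1 = a₁} := by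
  rw [mem_inters_iff_of_bot_notMem hA fun h => (hA' ⊥ h).1 rfl] at hp
  obtain ⟨a, ha⟩ := hA
  obtain ⟨q₀, rfl⟩ := exists_emb_eq_of_mem hA' ha
  refine (mem_inters_iff_of_bot_notMem ?_ ?_).mpr ?_
  · exact ⟨q₀.1.1, q₀, ha, rfl⟩
  · rintro ⟨q, -, hq⟩
    exact q.1.2.1 hq
  rintro _ ⟨q, hq, rfl⟩
  obtain ⟨z, hz, hzp, hzq⟩ := hp _ hq
  obtain ⟨r, rfl, hr, -⟩ := exists_emb_eq_of_isAtom_le hz hzq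
  exact ⟨r.1.1, hr, (emb_le_emb_iff.mp hzp).1, (emb_le_emb_iff.mp hzq).1⟩

lemma snd_mem_inters (hA : A.Nonempty) (hA' : ∀ q ∈ A, q ≠ ⊥ ∧ q ≠ ⊤)
    {p : Interior P₁ × Interior P₂} (hp : emb P₁ P₂ p ∈ inters _ A) :
    p.2.1 ∈ inters P₂ {a₂ | ∃ q, emb P₁ P₂ q ∈ A ∧ q.2.1 = a₂} := by
  rw [mem_inters_iff_of_bot_notMem hA fun h => (hA' ⊥ h).1 rfl] at hp
  obtain ⟨a, ha⟩ := hA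
  obtain ⟨q₀, rfl⟩ := exists_emb_eq_of_mem hA' ha
  refine (mem_inters_iff_of_bot_notMem ?_ ?_).mpr ?_
  · exact ⟨q₀.2.1, q₀, ha, rfl⟩
  · rintro ⟨q, -, hq⟩
    exact q.2.2.1 hq
  rintro _ ⟨q, hq, rfl⟩
  obtain ⟨z, hz, hzp, hzq⟩ := hp _ hq
  obtain ⟨r, rfl, -, hr⟩ := exists_emb_eq_of_isAtom_le hz hzq
  exact ⟨r.2.1, hr, (emb_le_emb_iff.mp hzp).2, (emb_le_emb_iff.mp hzq).2⟩

lemma top_mem_inters [Finite P₁] [Finite P₂] (hA : A.Nonempty)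
    (hA' : ∀ q ∈ A, q ≠ ⊥ ∧ q ≠ ⊤) : ⊤ ∈ inters (TruncProd P₁ P₂) A := by
  rw [mem_inters_iff_of_bot_notMem hA fun h => (hA' ⊥ h).1 rfl]
  intro a ha
  obtain ⟨q, rfl⟩ := exists_emb_eq_of_mem hA' ha
  obtain ⟨z₁, hz₁, hz₁q⟩ := (eq_bot_or_exists_atom_le q.1.1).resolve_left q.1.2.1
  obtain ⟨z₂, hz₂, hz₂q⟩ := (eq_bot_or_exists_atom_le q.2.1).resolve_left q.2.2.1
  let r : Interior P₁ × Interior P₂ :=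
    (⟨z₁, hz₁.1, ne_top_of_le_ne_top q.1.2.2 hz₁q⟩, ⟨z₂, hz₂.1, ne_top_of_le_ne_top q.2.2.2 hz₂q⟩)
  exact ⟨emb P₁ P₂ r, isAtom_emb_iff.mpr ⟨hz₁, hz₂⟩, le_top, emb_le_emb_iff.mpr ⟨hz₁q, hz₂q⟩⟩

end TruncProd

theorem stmt_8_general {P₁ P₂ : Type*}
    [PartialOrder P₁] [BoundedOrder P₁] [Fintype P₁]
    [PartialOrder P₂] [BoundedOrder P₂] [Fintype P₂]
    (A : Set (TruncProd P₁ P₂)) (hA : A.Nonempty)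
    (hA' : ∀ q ∈ A, q ≠ ⊥ ∧ q ≠ ⊤)
    (A1 : Set P₁)
    (hA1 : A1 = {a₁ : P₁ | ∃ p : Interior P₁ × Interior P₂, emb P₁ P₂ p ∈ A ∧ p.1.1 = a₁})
    (A2 : Set P₂)
    (hA2 : A2 = {a₂ : P₂ | ∃ p : Interior P₁ × Interior P₂, emb P₁ P₂ p ∈ A ∧ p.2.1 = a₂})
    (h : minsOf P₁ (inters P₁ A1) = {(⊤ : P₁)} ∨ minsOf P₂ (inters P₂ A2) = {(⊤ : P₂)}) :
    inters (TruncProd P₁ P₂) A = {(⊤ : TruncProd P₁ P₂)} := by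
  subst hA1 hA2
  ext b
  refine ⟨fun hb => ?_, fun hb => hb ▸ top_mem_inters hA hA'⟩
  by_contra hb_top
  have hb_bot : b ≠ ⊥ :=
    ne_of_mem_of_not_mem hb (bot_notMem_inters hA fun h => (hA' ⊥ h).1 rfl)
  obtain ⟨p, rfl⟩ := exists_emb_eq hb_bot hb_top
  rcases h with h | h
  · exact p.1.2.2 (eq_top_of_minsOf_eq_singleton_top h (fst_mem_inters hA hA' hb))
  · exact p.2.2.2 (eq_top_of_minsOf_eq_singleton_top h (snd_mem_inters hA hA' hb))

theorem stmt_8 {P₁ P₂ : Type*}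
    [PartialOrder P₁] [BoundedOrder P₁] [Fintype P₁]
    [PartialOrder P₂] [BoundedOrder P₂] [Fintype P₂]
    (hc1 : 2 < Fintype.card P₁) (hc2 : 2 < Fintype.card P₂)
    (A : Set (TruncProd P₁ P₂)) (hA : A.Nonempty)
    (hA' : ∀ q ∈ A, q ≠ ⊥ ∧ q ≠ ⊤)
    (A1 : Set P₁)
    (hA1 : A1 = {a₁ : P₁ | ∃ p : Interior P₁ × Interior P₂, emb P₁ P₂ p ∈ A ∧ p.1.1 = a₁})
    (A2 : Set P₂)
    (hA2 : A2 = {a₂ : P₂ | ∃ p : Interior P₁ × Interior P₂, emb P₁ P₂ p ∈ A ∧ p.2.1 = a₂})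
    (h : minsOf P₁ (inters P₁ A1) = {(⊤ : P₁)} ∨ minsOf P₂ (inters P₂ A2) = {(⊤ : P₂)}) :
    inters (TruncProd P₁ P₂) A = {(⊤ : TruncProd P₁ P₂)} :=
  stmt_8_general A hA hA' A1 hA1 A2 hA2 h
end

section
/- Let P be a finite bounded poset with |P| > 1, and let b : Ant(P) → Ant(P) be the blocker map, b(A) = min I(P,A). Then the restriction of b to its image Antb(P) = b(Ant(P)) is an involution: for every B ∈ Antb(P), b(b(B)) = B. -/
open scoped Classical
open Set

/-!
Write `J S` for the upper polar of `S` under the symmetric relation "`x` and `y` lie above a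
common atom". On antichains the intersecters are exactly `J S` (an antichain containing `⊥` is
`{⊥}`, and `J {⊥} = ∅`), so `b A = min (J A)` for every antichain `A`. Since the relation is
upward closed, `J (min T) = J T`; hence `b (b A) = min (J (J A))` and
`b (b (b A)) = min (J (J (J A))) = min (J A) = b A`, the polar of a symmetric relation
satisfying `J ∘ J ∘ J = J`.
-/

section Blocker

variable {P : Type*} [PartialOrder P]

section Polar

variable {β : Type*} {r : P → β → Prop}

lemma upperPolar_minsOf [WellFoundedLT P] (hr : ∀ ⦃a a' b⦄, a ≤ a' → r a b → r a' b)
    (T : Set P) : upperPolar r (minsOf P T) = upperPolar r T := by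
  refine Set.Subset.antisymm (fun b hb a ha => ?_) (upperPolar_anti (r := r) fun _ h => h.1)
  obtain ⟨m, hma, hm⟩ := exists_minimal_le_of_wellFoundedLT (· ∈ T) a ha
  exact hr hma (hb hm)

end Polar

lemma isAntichain_minsOf (S : Set P) : IsAntichain (· ≤ ·) (minsOf P S) :=
  setOfPred_minimal_antichain (· ∈ S)

variable [OrderBot P]

def SharesAtom (x y : P) : Prop := ∃ z, IsAtom z ∧ z ≤ x ∧ z ≤ y

lemma SharesAtom.symm {x y : P} : SharesAtom x y → SharesAtom y x
  | ⟨z, hz, hzx, hzy⟩ => ⟨z, hz, hzy, hzx⟩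

lemma SharesAtom.mono_left {x x' y : P} (hxx' : x ≤ x') : SharesAtom x y → SharesAtom x' y
  | ⟨z, hz, hzx, hzy⟩ => ⟨z, hz, hzx.trans hxx', hzy⟩

lemma not_sharesAtom_bot (y : P) : ¬SharesAtom ⊥ y :=
  fun ⟨_, hz, hzb, _⟩ => hz.1 (le_bot_iff.mp hzb)

lemma upperPolar_sharesAtom_upperPolar_upperPolar (S : Set P) :
    upperPolar SharesAtom (upperPolar SharesAtom (upperPolar SharesAtom S)) =
      upperPolar SharesAtom S := by
  have hswap : Function.swap (SharesAtom (P := P)) = SharesAtom :=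
    funext₂ fun _ _ => propext ⟨SharesAtom.symm, SharesAtom.symm⟩
  have hlower : lowerPolar (SharesAtom (P := P)) = upperPolar SharesAtom := by
    funext T
    rw [← upperPolar_swap, hswap]
  simpa only [hlower] using upperPolar_lowerPolar_upperPolar (r := SharesAtom) S

lemma inters_eq_upperPolar_of_isAntichain {T : Set P} (hT : IsAntichain (· ≤ ·) T) :
    inters P T = upperPolar SharesAtom T := by
  by_cases h0 : T = ∅
  · rw [inters, if_pos h0, h0, upperPolar_empty]
  by_cases h1 : T = {⊥}
  · rw [inters, if_neg h0, if_pos h1, h1]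
    ext b
    simpa [mem_upperPolar_singleton] using not_sharesAtom_bot b
  have hbot : ⊥ ∉ T := fun hb => h1 <| eq_singleton_iff_unique_mem.mpr
    ⟨hb, fun a ha => by_contra fun hab => hT hb ha (Ne.symm hab) bot_le⟩
  rw [inters, if_neg h0, if_neg h1]
  ext b
  exact ⟨fun hb a ha => SharesAtom.symm (hb a ha (ne_of_mem_of_not_mem ha hbot)),
    fun hb a ha _ => SharesAtom.symm (hb ha)⟩

lemma bmap_eq_minsOf_upperPolar {T : Set P} (hT : IsAntichain (· ≤ ·) T) :
    bmap P T = minsOf P (upperPolar SharesAtom T) := by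
  rw [bmap, inters_eq_upperPolar_of_isAntichain hT]

lemma bmap_minsOf_upperPolar [WellFoundedLT P] (S : Set P) :
    bmap P (minsOf P (upperPolar SharesAtom S)) =
      minsOf P (upperPolar SharesAtom (upperPolar SharesAtom S)) := by
  rw [bmap_eq_minsOf_upperPolar (isAntichain_minsOf _),
    upperPolar_minsOf (r := SharesAtom) fun _ _ _ => SharesAtom.mono_left]

end Blocker

theorem stmt_13_general {P : Type*} [PartialOrder P] [BoundedOrder P] [Fintype P]
    (B : Set P) (hB : ∃ A : Set P, IsAntichain (· ≤ ·) A ∧ bmap P A = B) :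
    bmap P (bmap P B) = B := by
  obtain ⟨A, hA, rfl⟩ := hB
  rw [bmap_eq_minsOf_upperPolar hA, bmap_minsOf_upperPolar, bmap_minsOf_upperPolar,
    upperPolar_sharesAtom_upperPolar_upperPolar]

theorem stmt_13 {P : Type*} [PartialOrder P] [BoundedOrder P] [Fintype P] [Nontrivial P]
    (B : Set P) (hB : ∃ A : Set P, IsAntichain (· ≤ ·) A ∧ bmap P A = B) :
    bmap P (bmap P B) = B :=
  stmt_13_general B hB
end
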